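/- arXiv:cs/0703023 — 3 statements merged into one kernel-verified Lean document; each statement's English description precedes it below -/
import Mathlib

section
/- Suppose points c, a, d satisfy |ca| = 11·4^{i-1}, |da| = 2·4^{i-1}, |cd| = 9·4^{i-1} + α with 0 < α ≤ 1/10 for an integer i ≥ 1, and let d* be the point on segment ca with |d* a| = 2·4^{i-1}. Then |d d*| < √(4^i/11). -/
open AffineMap

/-- Stewart's theorem, for an arbitrary point of the line through `a` and `c`. -/
theorem dist_sq_lineMap {V P : Type*} [NormedAddCommGroup V] [InnerProductSpace ℝ V]
    [MetricSpace P] [NormedAddTorsor V P] (p a c : P) (t : ℝ) :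
    dist p (lineMap a c t) ^ 2 =
      (1 - t) * dist p a ^ 2 + t * dist p c ^ 2 - t * (1 - t) * dist a c ^ 2 := by
  have hpc : p -ᵥ c = (p -ᵥ a) - (c -ᵥ a) := (vsub_sub_vsub_cancel_right p c a).symm
  have hpl : p -ᵥ lineMap a c t = (p -ᵥ a) - t • (c -ᵥ a) := by
    rw [lineMap_apply, vsub_vadd_eq_vsub_sub]
  rw [dist_comm a c]
  simp only [dist_eq_norm_vsub V, hpc, hpl, norm_sub_sq_real, inner_smul_right,
    norm_smul, Real.norm_eq_abs, mul_pow, sq_abs]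
  ring

theorem dist_d_dstar_bound (i : ℕ) (hi : 1 ≤ i) (α : ℝ) (hα0 : 0 < α) (hα : α ≤ 1/10)
    (c a d dstar : EuclideanSpace ℝ (Fin 2))
    (hca : dist c a = 11 * 4^(i-1))
    (hda : dist d a = 2 * 4^(i-1))
    (hcd : dist c d = 9 * 4^(i-1) + α)
    -- d* is the point on segment ca with |d* a| = 2·4^{i-1}
    (hdstar : dstar = a + (2/11 : ℝ) • (c - a)) :
    dist d dstar < Real.sqrt (4^i / 11) := by
  set r : ℝ := 4 ^ (i - 1)
  have hr : 1 ≤ r := one_le_pow₀ (by norm_num)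
  have h4 : (4 : ℝ) ^ i = 4 * r := by rw [← pow_succ', Nat.sub_add_cancel hi]
  have hsq : dist d dstar ^ 2 = (36 * r * α + 2 * α ^ 2) / 11 := by
    rw [hdstar, add_comm, ← lineMap_apply_module', dist_sq_lineMap, dist_comm d c, dist_comm a c,
      hda, hcd, hca]
    ring
  rw [← Real.sqrt_sq dist_nonneg]
  apply Real.sqrt_lt_sqrt (sq_nonneg _)
  rw [hsq, h4]
  -- 36 r α + 2 α² ≤ 3.6 r + 0.02 < 4 r, as r ≥ 1
  nlinarith
end

section
/- For all real m, m' ≥ 0: ((10 + 3/4)m + (110/9 + 3/4)m' + 568/45)² < 9·(4m + 5 + 4m')² + 9·(3m - 3m')². Consequently 10m + (110/9)m' + 568/45 ≤ 3·√((4m+5+4m')² + (3m-3m')²) - (3/4)(m + m'). -/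
theorem twohalves_onehook_ineq (m m' : ℝ) (hm : 0 ≤ m) (hm' : 0 ≤ m') :
    ((10 + 3/4) * m + (110/9 + 3/4) * m' + 568/45)^2
      < 9 * (4*m + 5 + 4*m')^2 + 9 * (3*m - 3*m')^2 ∧
    10*m + (110/9)*m' + 568/45
      ≤ 3 * Real.sqrt ((4*m + 5 + 4*m')^2 + (3*m - 3*m')^2) - (3/4) * (m + m') := by
  have h1 : ((10 + 3/4) * m + (110/9 + 3/4) * m' + 568/45)^2
      < 9 * (4*m + 5 + 4*m')^2 + 9 * (3*m - 3*m')^2 := by nlinarith [sq_nonneg (3*m - 2*m'), sq_nonneg (2*m - 3*m'), sq_nonneg (7*m - 5*m'), mul_nonneg hm hm', sq_nonneg m, sq_nonneg m']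
  refine ⟨h1, ?_⟩
  have hs : (4*m + 5 + 4*m')^2 + (3*m - 3*m')^2 ≥ 0 := by positivity
  have h2 : ((10 + 3/4) * m + (110/9 + 3/4) * m' + 568/45)
      ≤ 3 * Real.sqrt ((4*m + 5 + 4*m')^2 + (3*m - 3*m')^2) := by
    have hl : 0 ≤ (10 + 3/4) * m + (110/9 + 3/4) * m' + 568/45 := by positivity
    have := Real.sqrt_le_sqrt (le_of_lt h1)
    rw [Real.sqrt_sq hl] at this
    calc (10 + 3/4) * m + (110/9 + 3/4) * m' + 568/45
        ≤ Real.sqrt (9 * (4*m + 5 + 4*m')^2 + 9 * (3*m - 3*m')^2) := this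
      _ = 3 * Real.sqrt ((4*m + 5 + 4*m')^2 + (3*m - 3*m')^2) := by
          rw [show (9:ℝ) * (4*m + 5 + 4*m')^2 + 9 * (3*m - 3*m')^2
              = 3^2 * ((4*m + 5 + 4*m')^2 + (3*m - 3*m')^2) by ring,
            Real.sqrt_mul (by positivity), Real.sqrt_sq (by norm_num)]
  linarith
end

section
/- Let r = (0, -15/8) and q₂ = (0, -(25/9)·4^n + 11/18) for n ≥ 1, and let L be the line of slope 3/4 through r. Then for any point w on L on the same side as positive x, |w r| + |r q₂| ≤ (√5/2)·|w q₂|. -/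
noncomputable def pt (x y : ℝ) : EuclideanSpace ℝ (Fin 2) :=
  (WithLp.equiv 2 (Fin 2 → ℝ)).symm ![x, y]

/-!
With `w - r = t • (4, 3)` and `q₂ - r = -d • (0, 1)` (`d ≥ 0`), the angle at `r` has cosine `-3/5`.
By the law of cosines, `|w q₂|² ≥ a² + b² + (6/5) a b` for `a = |w r|`, `b = |r q₂|`, and
`(5/4)(a² + b² + (6/5) a b) - (a + b)² = (a - b)² / 4 ≥ 0`.
-/

open Real RealInnerProductSpace

section InnerProductSpace

variable {E : Type*} [NormedAddCommGroup E] [InnerProductSpace ℝ E]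

-- Sharp: equality holds when `dist p r = dist r q` and the cosine of the angle at `r` is `-c`.
theorem dist_add_dist_le_of_inner_le {c : ℝ} (hc₀ : -1 < c) (hc₁ : c ≤ 1) {p r q : E}
    (h : ⟪p - r, q - r⟫ ≤ -c * (dist p r * dist r q)) :
    dist p r + dist r q ≤ √(2 / (1 + c)) * dist p q := by
  have hpos : 0 < 1 + c := by linarith
  have law_cos : dist p q ^ 2 = dist p r ^ 2 + dist r q ^ 2 - 2 * ⟪p - r, q - r⟫ := by
    rw [dist_comm r q, dist_eq_norm, dist_eq_norm, dist_eq_norm,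
      ← sub_sub_sub_cancel_right p q r, norm_sub_sq_real]
    ring
  -- by the law of cosines this reduces to `0 ≤ (1 - c) * (dist p r - dist r q) ^ 2`
  have hsq : (dist p r + dist r q) ^ 2 ≤ 2 / (1 + c) * dist p q ^ 2 := by
    rw [div_mul_eq_mul_div, le_div_iff₀ hpos, law_cos]
    nlinarith [mul_nonneg (sub_nonneg.2 hc₁) (sq_nonneg (dist p r - dist r q))]
  calc dist p r + dist r q ≤ √(2 / (1 + c) * dist p q ^ 2) :=
        Real.le_sqrt_of_sq_le hsq
    _ = √(2 / (1 + c)) * dist p q := by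
        rw [Real.sqrt_mul (by positivity), Real.sqrt_sq dist_nonneg]

end InnerProductSpace

theorem pt_sub_pt (a b c d : ℝ) : pt a b - pt c d = pt (a - c) (b - d) := by
  ext i; fin_cases i <;> simp [pt]

theorem inner_pt_pt (a b c d : ℝ) : ⟪pt a b, pt c d⟫ = a * c + b * d := by
  simp [pt, PiLp.inner_apply, Fin.sum_univ_two]; ring

theorem dist_pt_pt (a b c d : ℝ) : dist (pt a b) (pt c d) = √((a - c) ^ 2 + (b - d) ^ 2) := by
  rw [dist_eq_norm, pt_sub_pt, EuclideanSpace.norm_eq, Fin.sum_univ_two]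
  simp [pt]

theorem detour_via_r_general (n : ℕ) (t : ℝ) (ht : 0 ≤ t) :
    dist (pt (4*t) (-15/8 + 3*t)) (pt 0 (-15/8))
      + dist (pt 0 (-15/8)) (pt 0 (-(25/9) * 4^n + 11/18))
    ≤ (Real.sqrt 5 / 2) *
      dist (pt (4*t) (-15/8 + 3*t)) (pt 0 (-(25/9) * 4^n + 11/18)) := by
  set y : ℝ := -(25/9) * 4^n + 11/18
  have hy : y ≤ -15/8 := by
    have : (1 : ℝ) ≤ 4 ^ n := one_le_pow₀ (by norm_num)
    change -(25/9) * 4^n + 11/18 ≤ -15/8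
    linarith
  have hwr : dist (pt (4*t) (-15/8 + 3*t)) (pt 0 (-15/8)) = 5 * t := by
    rw [dist_pt_pt, show (4*t - 0) ^ 2 + (-15/8 + 3*t - -15/8) ^ 2 = (5 * t) ^ 2 by ring,
      Real.sqrt_sq (by linarith)]
  have hrq : dist (pt 0 (-15/8)) (pt 0 y) = -15/8 - y := by
    rw [dist_pt_pt, sub_self, zero_pow two_ne_zero, zero_add, Real.sqrt_sq (by linarith)]
  have hcos : ⟪pt (4*t) (-15/8 + 3*t) - pt 0 (-15/8), pt 0 y - pt 0 (-15/8)⟫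
      ≤ -(3/5) * (dist (pt (4*t) (-15/8 + 3*t)) (pt 0 (-15/8)) * dist (pt 0 (-15/8)) (pt 0 y)) := by
    rw [hwr, hrq, pt_sub_pt, pt_sub_pt, inner_pt_pt]
    linarith
  have hconst : √(2 / (1 + 3/5)) = √5 / 2 := by
    rw [show (2 : ℝ) / (1 + 3/5) = 5 / 2 ^ 2 by norm_num, Real.sqrt_div' _ (by norm_num),
      Real.sqrt_sq (by norm_num)]
  simpa only [hconst] using dist_add_dist_le_of_inner_le (by norm_num) (by norm_num) hcos

/-- For `w` on the line of slope 3/4 through `r = (0,-15/8)` on the positive-x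
side, the detour from `w` via `r` to `q₂` is at most `(√5/2)·|w q₂|`. -/
theorem detour_via_r (n : ℕ) (hn : 1 ≤ n) (t : ℝ) (ht : 0 ≤ t) :
    dist (pt (4*t) (-15/8 + 3*t)) (pt 0 (-15/8))
      + dist (pt 0 (-15/8)) (pt 0 (-(25/9) * 4^n + 11/18))
    ≤ (Real.sqrt 5 / 2) *
      dist (pt (4*t) (-15/8 + 3*t)) (pt 0 (-(25/9) * 4^n + 11/18)) :=
  detour_via_r_general n t ht
end
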